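/- arXiv:1709.06253 — 6 statements merged into one kernel-verified Lean document; each statement's English description precedes it below -/
import Mathlib

section
/- Let (A,m) be a Noetherian local ring, I an ideal of A, and M a finitely generated A-module. If grade(I,M) = 0 (i.e., I consists of zerodivisors on M and IM ≠ M), then grade(G_+, G_I(M)) = 0, where G_I(M) is the associated graded module of M with respect to I and G_+ is the irrelevant ideal of the associated graded ring G_I(A). -/
/-!
Since `I` consists of zerodivisors on `M` and `M` has only finitely many associated primes,
prime avoidance puts `I` inside one of them, so some `a ≠ 0` is killed by all of `I`. By Krull's
intersection theorem `a ∈ IᶜM \ I^{c+1}M` for some `c`, so its initial form `a tᶜ` is a nonzero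
element of `G_I(M)`. Every element of `G₊` is represented by a polynomial whose coefficients lie
in `I`, hence kills `a tᶜ`; so no element of `G₊` is `G_I(M)`-regular.
-/

set_option synthInstance.maxHeartbeats 1000000
set_option maxHeartbeats 1000000
noncomputable section

universe u

variable (A : Type u) [CommRing A] (I : Ideal A)

/-- The ideal `I·R(I)` of the Rees algebra generated by the degree-zero copy of `I`. -/
def degZeroIdeal : Ideal (reesAlgebra I) := Ideal.map (algebraMap A (reesAlgebra I)) I

/-- The associated graded ring `G_I(A) = ⊕_{n ≥ 0} Iⁿ/I^{n+1} = R(I)/I·R(I)`. -/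
abbrev AssocGradedRing := reesAlgebra I ⧸ degZeroIdeal A I

/-- The irrelevant ideal `R(I)₊ = ⊕_{n ≥ 1} Iⁿtⁿ` of the Rees algebra. -/
def reesPlus : Ideal (reesAlgebra I) :=
  RingHom.ker ((Polynomial.constantCoeff (R := A)).comp
    (Subalgebra.val (reesAlgebra I)).toRingHom)

/-- The irrelevant ideal `G₊ = ⊕_{n ≥ 1} Iⁿ/I^{n+1}` of the associated graded ring. -/
def gradedPlus : Ideal (AssocGradedRing A I) :=
  (reesPlus A I).map (Ideal.Quotient.mk (degZeroIdeal A I))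

variable (M : Type u) [AddCommGroup M] [Module A M]

/-- The Rees algebra acts on `M[t] = PolynomialModule A M` through `R(I) ⊆ A[t]`. -/
instance : Module (reesAlgebra I) (PolynomialModule A M) :=
  Module.compHom _ (Subalgebra.val (reesAlgebra I)).toRingHom

/-- The Rees module `R(I,M) = ⊕_{n ≥ 0} IⁿM tⁿ ⊆ M[t]`, as a module over the Rees algebra. -/
def reesModule : Submodule (reesAlgebra I) (PolynomialModule A M) where
  carrier := {p | ∀ n : ℕ, p.coeff n ∈ (I ^ n • ⊤ : Submodule A M)}
  add_mem' := by
    intro p q hp hq n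
    exact Submodule.add_mem _ (hp n) (hq n)
  zero_mem' := by
    intro n
    simp
  smul_mem' := by
    intro r p hp n
    have key : ((r : Polynomial A) • p).coeff n ∈ (I ^ n • ⊤ : Submodule A M) := by
      rw [PolynomialModule.smul_apply]
      refine Submodule.sum_mem _ ?_
      rintro ⟨i, j⟩ hij
      have hij : i + j = n := by simpa using hij
      have h1 : (r : Polynomial A).coeff i ∈ I ^ i := r.2 i
      have h3 : (r : Polynomial A).coeff i • (p.coeff j) ∈ I ^ i • (I ^ j • ⊤ : Submodule A M) :=
        Submodule.smul_mem_smul h1 (hp j)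
      rw [← Submodule.smul_assoc, smul_eq_mul, ← pow_add, hij] at h3
      exact h3
    exact key

instance : HasQuotient (reesModule A I M)
    (Submodule (reesAlgebra I) (reesModule A I M)) :=
  Submodule.hasQuotient (R := reesAlgebra I) (M := reesModule A I M)

/-- The associated graded module `G_I(M) = ⊕_{n ≥ 0} IⁿM/I^{n+1}M = R(I,M)/(I·R(I))·R(I,M)`,
as a module over the Rees algebra. -/
abbrev AssocGradedModule : Type u :=
  (reesModule A I M) ⧸
    (degZeroIdeal A I • (⊤ : Submodule (reesAlgebra I) (reesModule A I M)))

instance : AddCommGroup (AssocGradedModule A I M) :=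
  Submodule.Quotient.addCommGroup (R := reesAlgebra I) (M := reesModule A I M) _

instance : Module (reesAlgebra I) (AssocGradedModule A I M) :=
  Submodule.Quotient.module (R := reesAlgebra I) (M := reesModule A I M) _

/-- `G_I(M)` is a module over the associated graded ring `G_I(A)`. -/
instance : Module (AssocGradedRing A I) (AssocGradedModule A I M) :=
  Module.IsTorsionBySet.module (R := reesAlgebra I) (I := degZeroIdeal A I) (by
    intro x a
    obtain ⟨y, rfl⟩ := Submodule.Quotient.mk_surjective _ x
    rw [← Submodule.Quotient.mk_smul, Submodule.Quotient.mk_eq_zero]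
    exact Submodule.smul_mem_smul a.2 trivial)

/-- The grade of an ideal `J` on a module `N`: the supremum of lengths of `N`-regular
sequences contained in `J`. -/
def moduleGrade (S : Type*) [CommRing S] (J : Ideal S)
    (N : Type*) [AddCommGroup N] [Module S N] : ℕ∞ :=
  sSup {n : ℕ∞ | ∃ rs : List S, (rs.length : ℕ∞) = n ∧ (∀ r ∈ rs, r ∈ J) ∧
    RingTheory.Sequence.IsRegular N rs}

open Polynomial

section

variable {R N : Type*} [CommRing R] [AddCommGroup N] [Module R N]

theorem exists_ne_zero_forall_smul_eq_zero_of_forall_not_isSMulRegular [IsNoetherianRing R]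
    [Module.Finite R N] [Nontrivial N] {J : Ideal R} (hJ : ∀ x ∈ J, ¬ IsSMulRegular N x) :
    ∃ a : N, a ≠ 0 ∧ ∀ x ∈ J, x • a = 0 := by
  obtain ⟨p, hp, hJp⟩ : ∃ p ∈ associatedPrimes R N, J ≤ p :=
    (J.subset_union_prime_finite (associatedPrimes.finite R N) (f := id) ⊥ ⊥
      fun _ h _ _ ↦ h.isPrime).1 <| biUnion_associatedPrimes_eq_compl_regular R N ▸ hJ
  obtain ⟨hprime, a, rfl⟩ := isAssociatedPrime_iff.mp hp
  refine ⟨a, fun ha ↦ hprime.ne_top ?_, fun x hx ↦ by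
    simpa using Submodule.mem_colon_singleton.mp (hJp hx)⟩
  simp [ha]

theorem exists_mem_pow_smul_top_notMem_succ {J : Ideal R}
    (hJ : ⨅ n : ℕ, J ^ n • (⊤ : Submodule R N) = ⊥) {a : N} (ha : a ≠ 0) :
    ∃ c : ℕ, a ∈ J ^ c • (⊤ : Submodule R N) ∧ a ∉ J ^ (c + 1) • (⊤ : Submodule R N) := by
  by_contra! h
  have hmem (n : ℕ) : a ∈ J ^ n • (⊤ : Submodule R N) := by
    induction n with
    | zero => simp
    | succ n ih => exact h n ih
  exact ha (by simpa [hJ] using (Submodule.mem_iInf _).mpr hmem)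

end

theorem moduleGrade_eq_zero_of_smul_eq_zero {S N : Type*} [CommRing S] [AddCommGroup N]
    [Module S N] {J : Ideal S} {e : N} (he : e ≠ 0) (hJ : ∀ r ∈ J, r • e = 0) :
    moduleGrade S J N = 0 := by
  refine le_antisymm (sSup_le ?_) bot_le
  rintro n ⟨rs, rfl, hmem, hreg⟩
  cases rs with
  | nil => simp
  | cons r rs =>
    have hr : IsSMulRegular N r := ((RingTheory.Sequence.isRegular_cons_iff N r rs).mp hreg).1
    exact absurd (hr (show r • e = r • 0 by rw [hJ r (hmem r List.mem_cons_self), smul_zero])) he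

section AssocGraded

variable {A I M}

theorem coeff_mem_pow_succ_of_mem_degZeroIdeal {f : reesAlgebra I} (hf : f ∈ degZeroIdeal A I)
    (n : ℕ) : (f : A[X]).coeff n ∈ I ^ (n + 1) := by
  induction hf using Submodule.span_induction generalizing n with
  | mem g hg =>
    obtain ⟨x, hx, rfl⟩ := hg
    by_cases hn : n = 0
    · simpa [hn] using hx
    · simp [coeff_C, hn]
  | zero => simp
  | add g h _ _ hg hh => simpa using Ideal.add_mem _ (hg n) (hh n)
  | smul r g _ hg =>
    rw [smul_eq_mul, MulMemClass.coe_mul, coeff_mul]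
    refine Ideal.sum_mem _ fun ij hij ↦ ?_
    rw [Finset.HasAntidiagonal.mem_antidiagonal] at hij
    have := Ideal.mul_mem_mul (r.2 ij.1) (hg ij.2)
    rwa [← pow_add, ← add_assoc, hij] at this

theorem coeff_mem_pow_succ_smul_top_of_mem_degZeroIdeal_smul_top {z : reesModule A I M}
    (hz : z ∈ degZeroIdeal A I • (⊤ : Submodule (reesAlgebra I) (reesModule A I M))) (n : ℕ) :
    (z : PolynomialModule A M).coeff n ∈ I ^ (n + 1) • (⊤ : Submodule A M) := by
  induction hz using Submodule.smul_induction_on' with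
  | smul f hf x _ =>
    change ((f : A[X]) • (x : PolynomialModule A M)).coeff n ∈ _
    rw [PolynomialModule.smul_apply]
    refine Submodule.sum_mem _ fun ij hij ↦ ?_
    rw [Finset.HasAntidiagonal.mem_antidiagonal] at hij
    have := Submodule.smul_mem_smul (coeff_mem_pow_succ_of_mem_degZeroIdeal hf ij.1) (x.2 ij.2)
    rwa [← Submodule.smul_assoc, smul_eq_mul, ← pow_add, add_right_comm, hij] at this
  | add x _ y _ hx hy => simpa using Submodule.add_mem _ hx hy

theorem single_mem_reesModule {c : ℕ} {a : M} (ha : a ∈ I ^ c • (⊤ : Submodule A M)) :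
    PolynomialModule.single A c a ∈ reesModule A I M := fun n ↦ by
  rw [PolynomialModule.coeff_single, Finsupp.single_apply]
  split_ifs with h
  · exact h ▸ ha
  · exact zero_mem _

/-- The initial form `a*` of `a ∈ IᶜM`, realised as the class of `a tᶜ`. -/
def initialForm {c : ℕ} {a : M} (ha : a ∈ I ^ c • (⊤ : Submodule A M)) :
    AssocGradedModule A I M :=
  Submodule.Quotient.mk ⟨PolynomialModule.single A c a, single_mem_reesModule ha⟩

theorem initialForm_ne_zero {c : ℕ} {a : M} (ha : a ∈ I ^ c • (⊤ : Submodule A M))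
    (ha' : a ∉ I ^ (c + 1) • (⊤ : Submodule A M)) : initialForm ha ≠ 0 := by
  intro h
  rw [initialForm, Submodule.Quotient.mk_eq_zero] at h
  exact ha' (by simpa using coeff_mem_pow_succ_smul_top_of_mem_degZeroIdeal_smul_top h c)

theorem coeff_mem_of_mem_reesPlus {f : reesAlgebra I} (hf : f ∈ reesPlus A I) (n : ℕ) :
    (f : A[X]).coeff n ∈ I := by
  rcases Nat.eq_zero_or_pos n with rfl | hn
  · have : (f : A[X]).coeff 0 = 0 := by simpa [reesPlus] using hf
    simp [this]
  · exact Ideal.pow_le_self hn.ne' (f.2 n)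

theorem smul_initialForm_eq_zero {c : ℕ} {a : M} (ha : a ∈ I ^ c • (⊤ : Submodule A M))
    (haI : ∀ x ∈ I, x • a = 0) {r : AssocGradedRing A I} (hr : r ∈ gradedPlus A I) :
    r • initialForm ha = 0 := by
  obtain ⟨f, hf, rfl⟩ := (Ideal.mem_map_iff_of_surjective _ Ideal.Quotient.mk_surjective).mp hr
  have hfa : f • (⟨_, single_mem_reesModule ha⟩ : reesModule A I M) = 0 := by
    refine Subtype.ext <| PolynomialModule.ext <| Finsupp.ext fun n ↦ ?_
    change ((f : A[X]) • PolynomialModule.single A c a).coeff n = 0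
    rw [PolynomialModule.smul_single_apply]
    split_ifs
    · exact haI _ (coeff_mem_of_mem_reesPlus hf _)
    · rfl
  change f • initialForm ha = 0
  rw [initialForm, ← Submodule.Quotient.mk_smul, hfa, Submodule.Quotient.mk_zero]

end AssocGraded

/-- **`grade(I,M) = 0` implies `grade(G₊, G_I(M)) = 0`.**
Let `(A,m)` be a Noetherian local ring, `I` an ideal and `M` a finitely generated `A`-module.
If `grade(I,M) = 0`, i.e. `I` consists of zerodivisors on `M` and `IM ≠ M`, then
`grade(G₊, G_I(M)) = 0`, where `G_I(M)` is the associated graded module and `G₊` the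
irrelevant ideal of the associated graded ring. -/
theorem moduleGrade_assocGraded_eq_zero [IsNoetherianRing A] [IsLocalRing A] [Module.Finite A M]
    (hIM : (I • ⊤ : Submodule A M) ≠ ⊤)
    (hzd : ∀ x ∈ I, ¬ IsSMulRegular M x) :
    moduleGrade (AssocGradedRing A I) (gradedPlus A I) (AssocGradedModule A I M) = 0 := by
  have : Nontrivial M := (Submodule.nontrivial_iff A).mp (nontrivial_of_ne _ _ hIM)
  have hI : I ≠ ⊤ := by
    rintro rfl
    exact hIM (Submodule.top_smul _)
  obtain ⟨a, ha, haI⟩ := exists_ne_zero_forall_smul_eq_zero_of_forall_not_isSMulRegular hzd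
  obtain ⟨c, hc, hc'⟩ :=
    exists_mem_pow_smul_top_notMem_succ (Ideal.iInf_pow_smul_eq_bot_of_isLocalRing I hI) ha
  exact moduleGrade_eq_zero_of_smul_eq_zero (initialForm_ne_zero hc hc')
    fun r hr ↦ smul_initialForm_eq_zero hc haI hr

end
end

section
/- Let A be a Noetherian local ring, I an ideal, M a finitely generated A-module, and x ∈ I \ I^2 such that the initial form x* ∈ I/I^2 is a regular element on the associated graded module G_I(M). Then (I^{n+1}M :_M x) = I^nM for all n ≥ 0; in particular, x is a regular element on M. -/
/-!
If `x • m ∈ I^{n+1}M` then, by induction on `n`, regularity of the initial form `x*` on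
`G_I(M)` pushes `m` one step deeper into the `I`-adic filtration at each stage, so
`(I^{n+1}M :_M x) = IⁿM`. In particular every `m` with `x • m = 0` lies in `⋂ₙ IⁿM`, which
vanishes by Krull's intersection theorem because `x ∉ I²` forces `I` to be proper.
-/

namespace Ideal

variable {A M : Type*} [CommRing A] [AddCommGroup M] [Module A M] {I : Ideal A} {x : A}

theorem smul_mem_pow_succ_smul_top (hx : x ∈ I) {n : ℕ} {m : M}
    (hm : m ∈ (I ^ n • ⊤ : Submodule A M)) : x • m ∈ (I ^ (n + 1) • ⊤ : Submodule A M) := by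
  rw [pow_succ', mul_smul]
  exact Submodule.smul_mem_smul hx hm

theorem mem_pow_smul_top_of_smul_mem_pow_succ_smul_top
    (hreg : ∀ n : ℕ, ∀ m ∈ (I ^ n • ⊤ : Submodule A M),
      x • m ∈ (I ^ (n + 2) • ⊤ : Submodule A M) → m ∈ (I ^ (n + 1) • ⊤ : Submodule A M))
    (n : ℕ) {m : M} (hm : x • m ∈ (I ^ (n + 1) • ⊤ : Submodule A M)) :
    m ∈ (I ^ n • ⊤ : Submodule A M) := by
  induction n with
  | zero => simp
  | succ n ih =>
    have hm' : x • m ∈ (I ^ (n + 1) • ⊤ : Submodule A M) :=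
      Submodule.smul_mono_left (Ideal.pow_le_pow_right (n + 1).le_succ) hm
    exact hreg n m (ih hm') hm

theorem isSMulRegular_of_smul_mem_pow_succ_smul_top [IsNoetherianRing A] [Module.Finite A M]
    (hI : I ≤ jacobson ⊥)
    (h : ∀ n : ℕ, ∀ m : M,
      x • m ∈ (I ^ (n + 1) • ⊤ : Submodule A M) → m ∈ (I ^ n • ⊤ : Submodule A M)) :
    IsSMulRegular M x := by
  refine isSMulRegular_iff_right_eq_zero_of_smul.mpr fun m hm => ?_
  have hm_inf : m ∈ (⨅ n : ℕ, I ^ n • ⊤ : Submodule A M) :=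
    Submodule.mem_iInf _ |>.mpr fun n => h n m (hm ▸ Submodule.zero_mem _)
  rwa [I.iInf_pow_smul_eq_bot_of_le_jacobson hI] at hm_inf

end Ideal

/-- **Colon stability from regularity of an initial form.**
Let `A` be a Noetherian local ring, `I` an ideal, `M` a finitely generated `A`-module and
`x ∈ I \ I²` such that the initial form `x* ∈ I/I²` is regular on the associated graded module
`G_I(M) = ⊕_{n ≥ 0} IⁿM/I^{n+1}M` (i.e. for every `n` the induced multiplication map
`IⁿM/I^{n+1}M → I^{n+1}M/I^{n+2}M` is injective). Then `(I^{n+1}M :_M x) = IⁿM` for all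
`n ≥ 0`; in particular `x` is a regular element on `M`. -/
theorem colon_eq_of_initial_form_regular
    (A : Type*) [CommRing A] [IsNoetherianRing A] [IsLocalRing A]
    (I : Ideal A) (M : Type*) [AddCommGroup M] [Module A M] [Module.Finite A M]
    (x : A) (hxI : x ∈ I) (hxI2 : x ∉ I ^ 2)
    (hreg : ∀ n : ℕ, ∀ m ∈ (I ^ n • ⊤ : Submodule A M),
      x • m ∈ (I ^ (n + 2) • ⊤ : Submodule A M) → m ∈ (I ^ (n + 1) • ⊤ : Submodule A M)) :
    (∀ n : ℕ, ∀ m : M,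
      x • m ∈ (I ^ (n + 1) • ⊤ : Submodule A M) ↔ m ∈ (I ^ n • ⊤ : Submodule A M)) ∧
    IsSMulRegular M x := by
  have hcolon : ∀ n : ℕ, ∀ m : M,
      x • m ∈ (I ^ (n + 1) • ⊤ : Submodule A M) ↔ m ∈ (I ^ n • ⊤ : Submodule A M) :=
    fun n _ => ⟨Ideal.mem_pow_smul_top_of_smul_mem_pow_succ_smul_top hreg n,
      Ideal.smul_mem_pow_succ_smul_top hxI⟩
  have hI : I ≠ ⊤ := by
    rintro rfl
    exact hxI2 (by rw [Ideal.top_pow]; trivial)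
  have hI_jac : I ≤ Ideal.jacobson ⊥ :=
    (IsLocalRing.le_maximalIdeal hI).trans (IsLocalRing.maximalIdeal_le_jacobson _)
  exact ⟨hcolon,
    Ideal.isSMulRegular_of_smul_mem_pow_succ_smul_top hI_jac fun n m => (hcolon n m).mp⟩
end

section
/- Let A be a Noetherian ring, M a finitely generated A-module, and a ∈ A. Then there exist an ideal J of A and a positive integer n_0 such that Tor_{i+2}^A(M, A/(a^n)) ≅ Tor_i^A(M, J) for all i ≥ 1 and all n ≥ n_0. In fact one can take J = (0 :_A a^{n_0}) where n_0 is such that (0 :_A a^n) = (0 :_A a^{n_0}) for all n ≥ n_0. -/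
/-!
If `0 → K → P → Y → 0` is exact with `P` projective, splicing a projective resolution of `K`
onto `P → Y` gives a projective resolution of `Y`, whence `L_{n+2}F(Y) ≅ L_{n+1}F(K)` for every
additive functor `F`. Shifting twice, along `0 → (x) → A → A/(x) → 0` and
`0 → (0 :_A x) → A → (x) → 0`, gives `Tor_{i+2}(M, A/(x)) ≅ Tor_i(M, (0 :_A x))` for `i ≥ 1`.
For `x = aⁿ` the annihilators `(0 :_A aⁿ)` form an ascending chain of ideals, which is
stationary from some `n₀` on because `A` is Noetherian.
-/

open CategoryTheory Limits

noncomputable section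

namespace CategoryTheory

def Functor.mapAugmentHomologySuccSuccIso {C D : Type*} [Category C] [Category D]
    [HasZeroMorphisms C] [HasZeroMorphisms D] [CategoryWithHomology D]
    (F : C ⥤ D) [F.PreservesZeroMorphisms]
    (K : ChainComplex C ℕ) {X : C} (f : K.X 0 ⟶ X) (w : K.d 1 0 ≫ f = 0) (n : ℕ) :
    ((F.mapHomologicalComplex _).obj (K.augment f w)).homology (n + 2) ≅
      ((F.mapHomologicalComplex _).obj K).homology (n + 1) :=
  -- in degrees `≥ 1` the augmented complex is `K` shifted by one, definitionally
  HomologicalComplex.homologyIsoSc' _ (n + 3) (n + 2) (n + 1)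
      (ChainComplex.prev _ _) (ChainComplex.next_nat_succ _) ≪≫
    (HomologicalComplex.homologyIsoSc' ((F.mapHomologicalComplex _).obj K) (n + 2) (n + 1) n
      (ChainComplex.prev _ _) (ChainComplex.next_nat_succ _)).symm

variable {C D : Type*} [Category C] [Category D] [Abelian C] [Abelian D]

namespace ProjectiveResolution

variable {S : ShortComplex C} (hS : S.ShortExact) (Q : ProjectiveResolution S.X₁)

lemma complex_d_comp_π_f_zero_comp_f : Q.complex.d 1 0 ≫ Q.π.f 0 ≫ S.f = 0 :=
  (Q.complex_d_comp_π_f_zero_assoc S.f).trans zero_comp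

lemma π_f_zero_comp_f_comp_g : (Q.π.f 0 ≫ S.f) ≫ S.g = 0 :=
  (Category.assoc _ _ _).trans ((congrArg _ S.zero).trans comp_zero)

include hS in
lemma exact_π_f_zero_comp_f_g : (ShortComplex.mk _ _ (π_f_zero_comp_f_comp_g Q)).Exact :=
  (@ShortComplex.exact_iff_of_epi_of_isIso_of_mono _ _ _
    (ShortComplex.mk _ _ (π_f_zero_comp_f_comp_g Q)) S
    { τ₁ := Q.π.f 0, τ₂ := 𝟙 _, τ₃ := 𝟙 _ } (inferInstance : Epi (Q.π.f 0)) _ _).2 hS.exact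

lemma exact_complex_d_π_f_zero_comp_f [Mono S.f] :
    (ShortComplex.mk _ _ (complex_d_comp_π_f_zero_comp_f Q)).Exact :=
  (@ShortComplex.exact_iff_of_epi_of_isIso_of_mono _ _ _
    (ShortComplex.mk _ _ Q.complex_d_comp_π_f_zero)
    (ShortComplex.mk _ _ (complex_d_comp_π_f_zero_comp_f Q))
    { τ₁ := 𝟙 _, τ₂ := 𝟙 _, τ₃ := S.f } _ _ (inferInstance : Mono S.f)).1 Q.exact₀

def ofShortExact [Projective S.X₂] : ProjectiveResolution S.X₃ where
  complex := Q.complex.augment (Q.π.f 0 ≫ S.f) (complex_d_comp_π_f_zero_comp_f Q)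
  projective
    | 0 => ‹Projective S.X₂›
    | n + 1 => Q.projective n
  π := (ChainComplex.toSingle₀Equiv _ _).symm ⟨S.g, π_f_zero_comp_f_comp_g Q⟩
  quasiIso := ⟨fun
    | 0 => by
      have hπ : ((ChainComplex.toSingle₀Equiv _ S.X₃).symm ⟨S.g, π_f_zero_comp_f_comp_g Q⟩ :
          Q.complex.augment _ (complex_d_comp_π_f_zero_comp_f Q) ⟶ _).f 0 = S.g :=
        ChainComplex.toSingle₀Equiv_symm_apply_f_zero _ _
      rw [ChainComplex.quasiIsoAt₀_iff, ShortComplex.quasiIso_iff_of_zeros' _ rfl rfl rfl]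
      refine (ShortComplex.exact_and_epi_g_iff_of_iso ?_).2
        ⟨exact_π_f_zero_comp_f_g hS Q, hS.epi_g⟩
      refine ShortComplex.isoMk (Iso.refl _) (Iso.refl _) (Iso.refl _) ?_ ?_
      · exact (Category.id_comp _).trans (Category.comp_id _).symm
      · exact (Category.id_comp _).trans (hπ.symm.trans (Category.comp_id _).symm)
    | 1 => by
      rw [quasiIsoAt_iff_exactAt' _ _ (ChainComplex.exactAt_succ_single_obj _ _),
        HomologicalComplex.exactAt_iff' _ 2 1 0
          (ChainComplex.prev _ _) (ChainComplex.next_nat_succ _)]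
      have := hS.mono_f
      exact exact_complex_d_π_f_zero_comp_f Q
    | n + 2 => by
      rw [quasiIsoAt_iff_exactAt' _ _ (ChainComplex.exactAt_succ_single_obj _ _),
        HomologicalComplex.exactAt_iff' _ (n + 3) (n + 2) (n + 1)
          (ChainComplex.prev _ _) (ChainComplex.next_nat_succ _)]
      exact (Q.complex.exactAt_iff' (n + 2) (n + 1) n
        (ChainComplex.prev _ _) (ChainComplex.next_nat_succ _)).1 (Q.complex_exactAt_succ n)⟩

end ProjectiveResolution

def Functor.leftDerivedSuccSuccIsoOfShortExact (F : C ⥤ D) [F.Additive]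
    [HasProjectiveResolutions C] {S : ShortComplex C} (hS : S.ShortExact) [Projective S.X₂]
    (n : ℕ) : (F.leftDerived (n + 2)).obj S.X₃ ≅ (F.leftDerived (n + 1)).obj S.X₁ :=
  let Q : ProjectiveResolution S.X₁ := HasProjectiveResolution.out.some
  (Q.ofShortExact hS).isoLeftDerivedObj F (n + 2) ≪≫
    F.mapAugmentHomologySuccSuccIso _ _ Q.complex_d_comp_π_f_zero_comp_f n ≪≫
    (Q.isoLeftDerivedObj F (n + 1)).symm

end CategoryTheory

namespace Ideal

variable {A : Type u} [CommRing A]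

theorem annihilator_span_pow_monotone (a : A) :
    Monotone fun n : ℕ ↦ (Ideal.span {a ^ n}).annihilator :=
  fun _ _ h ↦
    Submodule.annihilator_mono (Ideal.span_singleton_le_span_singleton.2 (pow_dvd_pow a h))

theorem exists_annihilator_span_pow_eq [IsNoetherianRing A] (a : A) :
    ∃ n₀, 1 ≤ n₀ ∧ ∀ n ≥ n₀,
      (Ideal.span {a ^ n}).annihilator = (Ideal.span {a ^ n₀}).annihilator := by
  obtain ⟨N, hN⟩ :=
    monotone_stabilizes_iff_noetherian.2 ‹_› ⟨_, annihilator_span_pow_monotone a⟩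
  exact ⟨N + 1, N.succ_pos, fun n hn ↦ (hN n (by omega)).symm.trans (hN (N + 1) (by omega))⟩

variable (x : A)

def mulSpanSingleton : A →ₗ[A] Ideal.span {x} :=
  LinearMap.toSpanSingleton A _ ⟨x, Ideal.mem_span_singleton_self x⟩

theorem mulSpanSingleton_surjective : Function.Surjective (mulSpanSingleton x) := by
  rintro ⟨y, hy⟩
  obtain ⟨b, rfl⟩ := Ideal.mem_span_singleton'.1 hy
  exact ⟨b, rfl⟩

theorem ker_mulSpanSingleton :
    LinearMap.ker (mulSpanSingleton x) = (Ideal.span {x}).annihilator := by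
  ext b
  exact Submodule.coe_eq_zero.symm.trans (Submodule.mem_annihilator_span_singleton x b).symm

theorem exact_annihilator_subtype_mulSpanSingleton :
    Function.Exact (Ideal.span {x}).annihilator.subtype (mulSpanSingleton x) := by
  rw [LinearMap.exact_iff, Submodule.range_subtype, ker_mulSpanSingleton]

theorem shortExact_span_singleton_subtype_mkQ :
    (ModuleCat.shortComplexOfCompEqZero _ _
      (LinearMap.exact_subtype_mkQ (Ideal.span {x})).linearMap_comp_eq_zero).ShortExact :=
  ModuleCat.shortComplex_shortExact _ (LinearMap.exact_subtype_mkQ _)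
    (Submodule.injective_subtype _) (Submodule.mkQ_surjective _)

theorem shortExact_annihilator_subtype_mulSpanSingleton :
    (ModuleCat.shortComplexOfCompEqZero _ _
      (exact_annihilator_subtype_mulSpanSingleton x).linearMap_comp_eq_zero).ShortExact :=
  ModuleCat.shortComplex_shortExact _ (exact_annihilator_subtype_mulSpanSingleton x)
    (Submodule.injective_subtype _) (mulSpanSingleton_surjective x)

end Ideal

def CategoryTheory.Functor.leftDerivedQuotientSpanSingletonIso {A : Type u} [CommRing A]
    {D : Type*} [Category D] [Abelian D] (F : ModuleCat.{u} A ⥤ D) [F.Additive] (x : A)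
    (n : ℕ) :
    (F.leftDerived (n + 3)).obj (ModuleCat.of A (A ⧸ Ideal.span {x})) ≅
      (F.leftDerived (n + 1)).obj (ModuleCat.of A (Ideal.span {x}).annihilator) :=
  F.leftDerivedSuccSuccIsoOfShortExact (Ideal.shortExact_span_singleton_subtype_mkQ x) (n + 1) ≪≫
    F.leftDerivedSuccSuccIsoOfShortExact (Ideal.shortExact_annihilator_subtype_mulSpanSingleton x) n

end

theorem tor_shift_principal_general (A : Type u) [CommRing A] [IsNoetherianRing A]
    (M : Type u) [AddCommGroup M] [Module A M] (a : A) :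
    ∃ (J : Ideal A) (n₀ : ℕ), 1 ≤ n₀ ∧
      J = Submodule.annihilator (Ideal.span {a ^ n₀}) ∧
      (∀ n ≥ n₀, Submodule.annihilator (Ideal.span {a ^ n}) = J) ∧
      ∀ i : ℕ, 1 ≤ i → ∀ n ≥ n₀,
        Nonempty ((((Tor (ModuleCat.{u} A) (i + 2)).obj (ModuleCat.of A M)).obj
            (ModuleCat.of A (A ⧸ Ideal.span {a ^ n}))) ≅
          (((Tor (ModuleCat.{u} A) i).obj (ModuleCat.of A M)).obj (ModuleCat.of A J))) := by
  obtain ⟨n₀, hn₀, hstable⟩ := Ideal.exists_annihilator_span_pow_eq a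
  refine ⟨_, n₀, hn₀, rfl, hstable, fun i hi n hn ↦ ?_⟩
  obtain ⟨j, rfl⟩ := Nat.exists_eq_add_of_le' hi
  rw [← hstable n hn]
  exact ⟨Functor.leftDerivedQuotientSpanSingletonIso _ (a ^ n) j⟩

/-- **Dimension shifting for powers of a principal ideal.**
Let `A` be a Noetherian ring, `M` a finitely generated `A`-module and `a ∈ A`. Then there exist
an ideal `J` and `n₀ ≥ 1` such that `Tor_{i+2}^A(M, A/(aⁿ)) ≅ Tor_i^A(M, J)` for all `i ≥ 1` and
all `n ≥ n₀`; in fact one can take `J = (0 :_A a^{n₀})` where `n₀` is such that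
`(0 :_A aⁿ) = (0 :_A a^{n₀})` for all `n ≥ n₀`. -/
theorem tor_shift_principal (A : Type u) [CommRing A] [IsNoetherianRing A]
    (M : Type u) [AddCommGroup M] [Module A M] [Module.Finite A M] (a : A) :
    ∃ (J : Ideal A) (n₀ : ℕ), 1 ≤ n₀ ∧
      J = Submodule.annihilator (Ideal.span {a ^ n₀}) ∧
      (∀ n ≥ n₀, Submodule.annihilator (Ideal.span {a ^ n}) = J) ∧
      ∀ i : ℕ, 1 ≤ i → ∀ n ≥ n₀,
        Nonempty ((((Tor (ModuleCat.{u} A) (i + 2)).obj (ModuleCat.of A M)).obj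
            (ModuleCat.of A (A ⧸ Ideal.span {a ^ n}))) ≅
          (((Tor (ModuleCat.{u} A) i).obj (ModuleCat.of A M)).obj (ModuleCat.of A J))) :=
  tor_shift_principal_general A M a
end

section
/- Let A be a Noetherian ring, I an ideal of A, y ∈ A an A-regular (non-zerodivisor) element, and n a positive integer such that I^{n+1} = y I^n. Then there is a short exact sequence 0 → A/I^n → A/I^{n+1} → A/(y) → 0, where the first map is induced by multiplication by y. -/
/-!
Multiplication by `y` maps `A ⧸ Iⁿ` into `A ⧸ I^{n+1}` with image `(y) ⧸ I^{n+1}`, which is the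
kernel of the projection onto `A ⧸ (y)` because `I^{n+1} ⊆ (y)`. It is injective because
cancelling the non-zerodivisor `y` gives `(y·Iⁿ : y) = Iⁿ`.
-/

namespace Submodule

variable {R M M₂ : Type*} [Ring R] [AddCommGroup M] [Module R M] [AddCommGroup M₂] [Module R M₂]
  {p : Submodule R M} {q q' : Submodule R M₂} {f : M →ₗ[R] M₂}

theorem mapQ_injective (hf : p ≤ q.comap f) (hp : q.comap f ≤ p) :
    Function.Injective (p.mapQ q f hf) := by
  rw [← LinearMap.ker_eq_bot, ker_mapQ, le_antisymm hp hf, mkQ_map_self]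

theorem exact_mapQ_factor (hf : p ≤ q.comap f) (hq : q ≤ q') (h : LinearMap.range f ⊔ q = q') :
    Function.Exact (p.mapQ q f hf) (factor hq) := by
  rw [LinearMap.exact_iff, ker_mapQ, range_mapQ, comap_id, ← h, map_sup, mkQ_map_self, sup_bot_eq]

end Submodule

namespace Ideal

variable {A : Type*} [CommRing A]

theorem comap_mul_span_singleton_mul {y : A} (hy : y ∈ nonZeroDivisors A) (J : Ideal A) :
    Submodule.comap (LinearMap.mul A A y) (span {y} * J) = J := by
  ext b
  simp only [Submodule.mem_comap, LinearMap.mul_apply', mem_span_singleton_mul,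
    mul_cancel_left_mem_nonZeroDivisors hy, exists_eq_right]

end Ideal

theorem shortExact_of_principal_reduction_general (A : Type*) [CommRing A]
    (I : Ideal A) (y : A) (hy : y ∈ nonZeroDivisors A) (n : ℕ)
    (hred : I ^ (n + 1) = Ideal.span {y} * I ^ n) :
    ∃ (f : (A ⧸ I ^ n) →ₗ[A] (A ⧸ I ^ (n + 1)))
      (g : (A ⧸ I ^ (n + 1)) →ₗ[A] (A ⧸ Ideal.span {y})),
      (∀ b : A, f (Ideal.Quotient.mk (I ^ n) b) = Ideal.Quotient.mk (I ^ (n + 1)) (y * b)) ∧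
      (∀ b : A, g (Ideal.Quotient.mk (I ^ (n + 1)) b) = Ideal.Quotient.mk (Ideal.span {y}) b) ∧
      Function.Injective f ∧ Function.Surjective g ∧ Function.Exact f g := by
  have hcomap : Submodule.comap (LinearMap.mul A A y) (I ^ (n + 1)) = I ^ n := by
    rw [hred, Ideal.comap_mul_span_singleton_mul hy]
  have hle : I ^ (n + 1) ≤ Ideal.span {y} := hred ▸ Ideal.mul_le_left
  refine ⟨(I ^ n).mapQ _ _ hcomap.ge, Submodule.factor hle, fun _ ↦ rfl, fun _ ↦ rfl,
    Submodule.mapQ_injective _ hcomap.le, Submodule.factor_surjective hle,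
    Submodule.exact_mapQ_factor _ _ ?_⟩
  rw [Ideal.range_mul', sup_eq_left.2 hle]

/-- **The basic short exact sequence for an ideal with a principal reduction.**
Let `A` be a Noetherian ring, `I` an ideal, `y` a non-zerodivisor of `A` and `n ≥ 1` with
`I^{n+1} = y·Iⁿ`. Then there is a short exact sequence
`0 → A/Iⁿ → A/I^{n+1} → A/(y) → 0`, where the first map is induced by multiplication by `y`
and the second is the natural surjection. -/
theorem shortExact_of_principal_reduction (A : Type*) [CommRing A] [IsNoetherianRing A]
    (I : Ideal A) (y : A) (hy : y ∈ nonZeroDivisors A) (n : ℕ) (hn : 1 ≤ n)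
    (hred : I ^ (n + 1) = Ideal.span {y} * I ^ n) :
    ∃ (f : (A ⧸ I ^ n) →ₗ[A] (A ⧸ I ^ (n + 1)))
      (g : (A ⧸ I ^ (n + 1)) →ₗ[A] (A ⧸ Ideal.span {y})),
      (∀ b : A, f (Ideal.Quotient.mk (I ^ n) b) = Ideal.Quotient.mk (I ^ (n + 1)) (y * b)) ∧
      (∀ b : A, g (Ideal.Quotient.mk (I ^ (n + 1)) b) = Ideal.Quotient.mk (Ideal.span {y}) b) ∧
      Function.Injective f ∧ Function.Surjective g ∧ Function.Exact f g :=
  shortExact_of_principal_reduction_general A I y hy n hred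
end

section
/- Let A be a Noetherian ring, I an ideal of A, and M a finitely generated A-module containing an M-regular sequence x_1,...,x_g in I, with g ≥ 1. Then the elements x_1 t, ..., x_g t of degree 1 in the Rees algebra R(I) = ⊕_{n≥0} I^n t^n form a regular sequence on the R(I)-module M[t, t^{-1}] = M ⊗_A A[t,t^{-1}]. -/
/-!
The Rees algebra acts on `A[t,t⁻¹] ⊗_A M` through `R(I) → A[t,t⁻¹]`, where `xᵢt` becomes the
unit `t` times `xᵢ`. Multiplying a sequence by a unit changes neither its partial ideals nor which
elements are nonzerodivisors on the successive quotients, so it suffices that `x₁, …, x_g` is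
regular on `A[t,t⁻¹] ⊗_A M`. This is flat base change of the regularity on `M`, and the final
quotient stays nonzero because `A[t,t⁻¹]` is free, hence faithfully flat, over `A`.
-/

open Polynomial TensorProduct

lemma Ideal.ofList_map_unit_mul {R : Type*} [CommRing R] {u : R} (hu : IsUnit u) (rs : List R) :
    Ideal.ofList (rs.map (u * ·)) = Ideal.ofList rs := by
  induction rs with
  | nil => rfl
  | cons r rs ih =>
    rw [List.map_cons, Ideal.ofList_cons, Ideal.ofList_cons, ih,
      Ideal.span_singleton_mul_left_unit hu]

namespace RingTheory.Sequence

variable {R S M : Type*} [CommRing R] [CommRing S] [AddCommGroup M] [Module R M]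

lemma isRegular_map_iff_of_smul_eq [Module S M] (f : R →+* S)
    (hf : ∀ (r : R) (m : M), f r • m = r • m) (rs : List R) :
    IsRegular M (rs.map f) ↔ IsRegular M rs :=
  (AddEquiv.refl M).isRegular_congr <| List.forall₂_map_left_iff.mpr <|
    List.forall₂_same.mpr fun r _ m => hf r m

lemma isRegular_map_unit_mul_iff {u : R} (hu : IsUnit u) (rs : List R) :
    IsRegular M (rs.map (u * ·)) ↔ IsRegular M rs := by
  rw [isRegular_iff, isRegular_iff, isWeaklyRegular_iff, isWeaklyRegular_iff,
    Ideal.ofList_map_unit_mul hu]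
  refine and_congr_left' ?_
  simp only [List.length_map, List.getElem_map]
  refine forall₂_congr fun i _ => ?_
  rw [← List.map_take, Ideal.ofList_map_unit_mul hu]
  exact IsSMulRegular.mul_iff_right (hu.isSMulRegular _)

lemma IsRegular.baseChange [Algebra R S] [Module.FaithfullyFlat R S] {rs : List R}
    (h : IsRegular M rs) : IsRegular (S ⊗[R] M) (rs.map (algebraMap R S)) := by
  rw [isRegular_iff] at h ⊢
  refine ⟨(isWeaklyRegular_map_algebraMap_iff S _ rs).mpr h.1.isWeaklyRegular_lTensor, ?_⟩
  rw [ne_comm, ← Ideal.map_ofList,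
    (TensorProduct.isBaseChange R M S).map_smul_top_ne_top_iff_of_faithfullyFlat]
  exact h.2.symm

end RingTheory.Sequence

/-- **`x₁t, …, x_g t` is a regular sequence on `M[t,t⁻¹]` over the Rees algebra.**
Let `A` be a Noetherian ring, `I` an ideal, and `M` a finitely generated `A`-module containing
an `M`-regular sequence `x₁, …, x_g` in `I` with `g ≥ 1`. Then the degree-one elements
`x₁t, …, x_gt` of the Rees algebra `R(I) = ⊕_{n ≥ 0} Iⁿtⁿ` form a regular sequence on the
`R(I)`-module `M[t,t⁻¹] = M ⊗_A A[t,t⁻¹]`. -/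
theorem rees_regular_sequence_on_laurent_module
    (A : Type*) [CommRing A] (I : Ideal A)
    (M : Type*) [AddCommGroup M] [Module A M]
    (g : ℕ) (xs : Fin g → A) (hmem : ∀ i, xs i ∈ I)
    (hreg : RingTheory.Sequence.IsRegular M (List.ofFn xs)) :
    letI : Module (reesAlgebra I) (LaurentPolynomial A ⊗[A] M) :=
      Module.compHom _
        ((Polynomial.toLaurent (R := A)).comp (Subalgebra.val (reesAlgebra I)).toRingHom)
    RingTheory.Sequence.IsRegular (LaurentPolynomial A ⊗[A] M)
      (List.ofFn fun i : Fin g =>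
        (⟨Polynomial.monomial 1 (xs i),
          reesAlgebra.monomial_mem.mpr (by simpa using hmem i)⟩ : reesAlgebra I)) := by
  let f := (Polynomial.toLaurent (R := A)).comp (Subalgebra.val (reesAlgebra I)).toRingHom
  let _ : Module (reesAlgebra I) (LaurentPolynomial A ⊗[A] M) := Module.compHom _ f
  have := hreg.nontrivial
  have : Nontrivial A := Module.nontrivial A M
  have hbase :=
    (RingTheory.Sequence.isRegular_map_unit_mul_iff (LaurentPolynomial.isUnit_T 1) _).mpr
      (hreg.baseChange (S := LaurentPolynomial A))
  refine (RingTheory.Sequence.isRegular_map_iff_of_smul_eq f (fun _ _ => rfl) _).mp ?_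
  convert hbase using 1
  simp only [List.map_ofFn]
  congr 1
  funext i
  change toLaurent (monomial 1 (xs i)) = LaurentPolynomial.T 1 * LaurentPolynomial.C (xs i)
  rw [toLaurent_C_mul_T, mul_comm, Nat.cast_one]
end

section
/- Let (A,m) be a Noetherian local ring, I an ideal, and M a finitely generated A-module. Suppose further that grade(I,M) > 0. Then the Ratliff-Rush closures stabilize: the set { n ≥ 1 : (I^{m+n}M :_M I^m) = I^nM for all m ≥ 1 } contains all sufficiently large n; equivalently, defining Ĩ^nM = ∪_{m≥1}(I^{m+n}M :_M I^m), we have Ĩ^nM = I^nM for all n ≫ 0. -/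
/-!
Fix an `M`-regular `x ∈ I`. The filtration `Fₙ = (I^{n+1}M :_M I)` is `I`-stable: multiplication
by `x` embeds it into the stable filtration `I^{n+1}M`, and over a Noetherian ring a subfiltration
of a stable filtration is stable. As `I Fₙ ⊆ I^{n+1}M`, stability gives
`Fₙ = I^{n-n₀} F_{n₀} ⊆ I^n M` for `n > n₀`, so `(I^{n+1}M :_M I) = I^n M` for `n ≫ 0`. The identity
`(N :_M I^{m+1}) = ((N :_M I^m) :_M I)` then extends this to all `m` by induction.
-/

namespace Submodule

variable {R M : Type*} [CommRing R] [AddCommGroup M] [Module R M]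

/-- The module colon `(N :_M J) = {z ∈ M | J z ⊆ N}`; Mathlib's `Submodule.colon` is the
ideal `(N :_R S)` instead. -/
def colonBy (N : Submodule R M) (J : Ideal R) : Submodule R M where
  carrier := {z | ∀ a ∈ J, a • z ∈ N}
  zero_mem' a _ := by simp
  add_mem' hz hw a ha := by simpa only [smul_add] using N.add_mem (hz a ha) (hw a ha)
  smul_mem' r z hz a ha := by simpa only [smul_comm a r] using N.smul_mem r (hz a ha)

variable {N N' P : Submodule R M} {J K : Ideal R} {z : M}

theorem mem_colonBy : z ∈ N.colonBy J ↔ ∀ a ∈ J, a • z ∈ N :=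
  Iff.rfl

theorem le_colonBy_iff : P ≤ N.colonBy J ↔ J • P ≤ N := by
  rw [smul_le]
  exact ⟨fun h a ha z hz => h hz a ha, fun h z hz a ha => h a ha z hz⟩

theorem smul_colonBy_le : J • N.colonBy J ≤ N :=
  le_colonBy_iff.mp le_rfl

theorem colonBy_mono (h : N ≤ N') : N.colonBy J ≤ N'.colonBy J :=
  fun _ hz a ha => h (hz a ha)

theorem colonBy_top : N.colonBy ⊤ = N :=
  le_antisymm (fun z hz => one_smul R z ▸ hz 1 trivial) (le_colonBy_iff.mpr smul_le_right)

theorem colonBy_mul : N.colonBy (J * K) = (N.colonBy J).colonBy K :=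
  eq_of_forall_le_iff fun P => by
    rw [le_colonBy_iff, le_colonBy_iff, le_colonBy_iff, mul_smul]

end Submodule

namespace Ideal.Filtration

variable {R M M' : Type*} [CommRing R] [AddCommGroup M] [Module R M] [AddCommGroup M']
  [Module R M'] {I : Ideal R}

def map (F : I.Filtration M) (f : M →ₗ[R] M') : I.Filtration M' where
  N n := (F.N n).map f
  mono n := Submodule.map_mono (F.mono n)
  smul_le n := by
    rw [← Submodule.map_smul'']
    exact Submodule.map_mono (F.smul_le n)

theorem Stable.of_map {F : I.Filtration M} {f : M →ₗ[R] M'} (hf : Function.Injective f)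
    (h : (F.map f).Stable) : F.Stable := by
  obtain ⟨n₀, hn₀⟩ := h
  refine ⟨n₀, fun n hn => Submodule.map_injective_of_injective hf ?_⟩
  rw [Submodule.map_smul'']
  exact hn₀ n hn

end Ideal.Filtration

namespace Ideal

open Submodule

variable {R : Type*} [CommRing R] (I : Ideal R) (M : Type*) [AddCommGroup M] [Module R M]

theorem smul_pow_smul_top (n : ℕ) : I • (I ^ n • ⊤ : Submodule R M) = I ^ (n + 1) • ⊤ := by
  rw [← mul_smul, ← pow_succ']

def colonFiltration : I.Filtration M where
  N n := (I ^ (n + 1) • ⊤ : Submodule R M).colonBy I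
  mono _ := colonBy_mono (smul_mono_left (pow_le_pow_right (Nat.le_succ _)))
  smul_le _ := le_colonBy_iff.mpr <|
    (smul_mono_right I smul_colonBy_le).trans_eq (smul_pow_smul_top I M _)

variable {I M}

theorem colonFiltration_stable [IsNoetherianRing R] [Module.Finite R M] {x : R} (hx : x ∈ I)
    (hreg : IsSMulRegular M x) : (I.colonFiltration M).Stable := by
  refine Ideal.Filtration.Stable.of_map (f := LinearMap.lsmul R M x) hreg ?_
  refine (I.stableFiltration_stable (I • ⊤)).of_le fun n => ?_
  rintro _ ⟨z, hz, rfl⟩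
  change x • z ∈ I ^ n • I • ⊤
  rw [← mul_smul, ← pow_succ]
  exact hz x hx

theorem colonBy_pow_eq_of_colonBy_eq {n₀ : ℕ}
    (h : ∀ n ≥ n₀, (I ^ (n + 1) • ⊤ : Submodule R M).colonBy I = I ^ n • ⊤) (m : ℕ) {n : ℕ}
    (hn : n₀ ≤ n) : (I ^ (m + n) • ⊤ : Submodule R M).colonBy (I ^ m) = I ^ n • ⊤ := by
  induction m generalizing n with
  | zero => rw [zero_add, pow_zero, one_eq_top, colonBy_top]
  | succ m ih =>
    rw [pow_succ, colonBy_mul, add_right_comm, add_assoc, ih (by omega), h n hn]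

variable [IsNoetherianRing R] [Module.Finite R M] {x : R}

theorem exists_colonBy_eq_pow_smul (hx : x ∈ I) (hreg : IsSMulRegular M x) :
    ∃ n₀, ∀ n ≥ n₀, (I ^ (n + 1) • ⊤ : Submodule R M).colonBy I = I ^ n • ⊤ := by
  obtain ⟨n₀, hn₀⟩ := (colonFiltration_stable hx hreg).exists_pow_smul_eq_of_ge
  refine ⟨n₀ + 1, fun n hn => le_antisymm ?_ (le_colonBy_iff.mpr (smul_pow_smul_top I M n).le)⟩
  obtain ⟨k, rfl⟩ : ∃ k, n = k + 1 + n₀ := ⟨n - (n₀ + 1), by omega⟩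
  calc (I.colonFiltration M).N (k + 1 + n₀)
      = I ^ k • I • (I.colonFiltration M).N n₀ := by
        rw [hn₀ _ (by omega), Nat.add_sub_cancel, pow_succ, mul_smul]
    _ ≤ I ^ k • I ^ (n₀ + 1) • ⊤ := smul_mono_right _ smul_colonBy_le
    _ = I ^ (k + 1 + n₀) • ⊤ := by rw [← mul_smul, ← pow_add, add_assoc, add_comm 1]

theorem exists_colonBy_pow_eq_pow_smul (hx : x ∈ I) (hreg : IsSMulRegular M x) :
    ∃ n₀, ∀ n ≥ n₀, ∀ m, (I ^ (m + n) • ⊤ : Submodule R M).colonBy (I ^ m) = I ^ n • ⊤ := by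
  obtain ⟨n₀, hn₀⟩ := exists_colonBy_eq_pow_smul hx hreg
  exact ⟨n₀, fun n hn m => colonBy_pow_eq_of_colonBy_eq hn₀ m hn⟩

end Ideal

theorem ratliffRush_stabilizes_general (A : Type*) [CommRing A] [IsNoetherianRing A]
    (I : Ideal A) (M : Type*) [AddCommGroup M] [Module A M] [Module.Finite A M]
    (hgrade : ∃ x ∈ I, IsSMulRegular M x) :
    ∃ n₁ : ℕ, ∀ n ≥ n₁, ∀ m : ℕ, 1 ≤ m → ∀ z : M,
      (∀ a ∈ I ^ m, a • z ∈ (I ^ (m + n) • ⊤ : Submodule A M)) ↔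
        z ∈ (I ^ n • ⊤ : Submodule A M) := by
  obtain ⟨x, hx, hreg⟩ := hgrade
  obtain ⟨n₀, hn₀⟩ := I.exists_colonBy_pow_eq_pow_smul hx hreg
  refine ⟨n₀, fun n hn m _ z => ?_⟩
  rw [← Submodule.mem_colonBy, hn₀ n hn m]

/-- **Ratliff–Rush closures stabilize.**
Let `(A,m)` be a Noetherian local ring, `I` an ideal and `M` a finitely generated `A`-module
with `grade(I,M) > 0` (i.e. `I` contains an `M`-regular element). Then for all `n ≫ 0` and
all `m ≥ 1` we have `(I^{m+n}M :_M I^m) = I^n M`; equivalently the Ratliff–Rush closure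
`Ĩⁿ M = ∪_{m ≥ 1} (I^{m+n}M :_M I^m)` equals `IⁿM` for all `n ≫ 0`. -/
theorem ratliffRush_stabilizes (A : Type*) [CommRing A] [IsNoetherianRing A] [IsLocalRing A]
    (I : Ideal A) (M : Type*) [AddCommGroup M] [Module A M] [Module.Finite A M]
    (hgrade : ∃ x ∈ I, IsSMulRegular M x) :
    ∃ n₁ : ℕ, ∀ n ≥ n₁, ∀ m : ℕ, 1 ≤ m → ∀ z : M,
      (∀ a ∈ I ^ m, a • z ∈ (I ^ (m + n) • ⊤ : Submodule A M)) ↔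
        z ∈ (I ^ n • ⊤ : Submodule A M) :=
  ratliffRush_stabilizes_general A I M hgrade
end
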